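/- arXiv:math/0408100 — 3 statements merged into one kernel-verified Lean document; each statement's English description precedes it below -/
import Mathlib

section
/- For every \delta \in {0,1} and every s \in C with s \notin Z, one has G_\delta(s) \cdot G_\delta(1-s) = (-1)^\delta. -/
/-- `Γ_C(s) = 2 (2π)^{-s} Γ(s)` -/
noncomputable def GammaC (s : ℂ) : ℂ := 2 * (2 * Real.pi : ℂ) ^ (-s) * Complex.Gamma s

/-- The Gamma factors `G_0(s) = Γ_C(s) cos(πs/2)` and `G_1(s) = i Γ_C(s) sin(πs/2)`. -/
noncomputable def G (δ : ℕ) (s : ℂ) : ℂ :=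
  if δ = 0 then GammaC s * Complex.cos ((Real.pi : ℂ) * s / 2)
  else Complex.I * GammaC s * Complex.sin ((Real.pi : ℂ) * s / 2)

lemma GammaC_mul (s : ℂ) : GammaC s * GammaC (1 - s)
    = (2 : ℂ) / Complex.sin ((Real.pi : ℂ) * s) := by
  have hπ : (Real.pi : ℂ) ≠ 0 := by exact_mod_cast Real.pi_ne_zero
  have h2π : (2 * Real.pi : ℂ) ≠ 0 := by
    simp [hπ]
  have hpow : (2 * (Real.pi : ℂ)) ^ (-s) * (2 * (Real.pi : ℂ)) ^ (-(1 - s))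
      = (2 * (Real.pi : ℂ)) ^ (-(1 : ℂ)) := by
    rw [← Complex.cpow_add _ _ h2π]
    ring_nf
  have hG := Complex.Gamma_mul_Gamma_one_sub s
  unfold GammaC
  calc 2 * (2 * (Real.pi : ℂ)) ^ (-s) * Complex.Gamma s *
        (2 * (2 * (Real.pi : ℂ)) ^ (-(1 - s)) * Complex.Gamma (1 - s))
      = 4 * ((2 * (Real.pi : ℂ)) ^ (-s) * (2 * (Real.pi : ℂ)) ^ (-(1 - s))) *
        (Complex.Gamma s * Complex.Gamma (1 - s)) := by ring
    _ = 4 * ((2 * (Real.pi : ℂ))⁻¹) * ((Real.pi : ℂ) / Complex.sin ((Real.pi : ℂ) * s)) := by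
        rw [hpow, Complex.cpow_neg_one, hG]
    _ = 2 / Complex.sin ((Real.pi : ℂ) * s) := by
        have h4 : (4 : ℂ) * (2 * (Real.pi : ℂ))⁻¹ * (Real.pi : ℂ) = 2 := by
          field_simp; ring
        rw [show (4 : ℂ) * (2 * (Real.pi : ℂ))⁻¹ *
            ((Real.pi : ℂ) / Complex.sin ((Real.pi : ℂ) * s)) =
            (4 : ℂ) * (2 * (Real.pi : ℂ))⁻¹ * (Real.pi : ℂ) /
            Complex.sin ((Real.pi : ℂ) * s) by ring, h4]

theorem G_mul_G_one_sub (δ : ℕ) (hδ : δ = 0 ∨ δ = 1) (s : ℂ)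
    (hs : ∀ n : ℤ, s ≠ (n : ℂ)) :
    G δ s * G δ (1 - s) = (-1 : ℂ) ^ δ := by
  have hπ : (Real.pi : ℂ) ≠ 0 := by exact_mod_cast Real.pi_ne_zero
  have hsin : Complex.sin ((Real.pi : ℂ) * s) ≠ 0 := by
    rw [Complex.sin_ne_zero_iff]
    intro k h
    exact hs k (mul_left_cancel₀ hπ (h.trans (mul_comm _ _)))
  have hcos1 : Complex.cos ((Real.pi : ℂ) * (1 - s) / 2) =
      Complex.sin ((Real.pi : ℂ) * s / 2) := by
    have : (Real.pi : ℂ) * (1 - s) / 2 = (Real.pi : ℂ) / 2 - (Real.pi : ℂ) * s / 2 := by ring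
    rw [this, Complex.cos_pi_div_two_sub]
  have hsin1 : Complex.sin ((Real.pi : ℂ) * (1 - s) / 2) =
      Complex.cos ((Real.pi : ℂ) * s / 2) := by
    have : (Real.pi : ℂ) * (1 - s) / 2 = (Real.pi : ℂ) / 2 - (Real.pi : ℂ) * s / 2 := by ring
    rw [this, Complex.sin_pi_div_two_sub]
  have hdbl : Complex.sin ((Real.pi : ℂ) * s) =
      2 * Complex.sin ((Real.pi : ℂ) * s / 2) * Complex.cos ((Real.pi : ℂ) * s / 2) := by
    have h := Complex.sin_two_mul ((Real.pi : ℂ) * s / 2)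
    rw [show 2 * ((Real.pi : ℂ) * s / 2) = (Real.pi : ℂ) * s by ring] at h
    exact h
  have hs2 : Complex.sin ((Real.pi : ℂ) * s / 2) ≠ 0 := fun h => hsin (by rw [hdbl, h]; ring)
  have hc2 : Complex.cos ((Real.pi : ℂ) * s / 2) ≠ 0 := fun h => hsin (by rw [hdbl, h]; ring)
  have key := GammaC_mul s
  rcases hδ with h | h <;> subst h
  · simp only [G, pow_zero, reduceIte]
    calc GammaC s * Complex.cos ((Real.pi : ℂ) * s / 2) *
          (GammaC (1 - s) * Complex.cos ((Real.pi : ℂ) * (1 - s) / 2))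
        = GammaC s * GammaC (1 - s) *
          (Complex.cos ((Real.pi : ℂ) * s / 2) * Complex.sin ((Real.pi : ℂ) * s / 2)) := by
          rw [hcos1]; ring
      _ = 1 := by rw [key, hdbl]; field_simp
  · simp only [G, reduceIte, pow_one]
    calc Complex.I * GammaC s * Complex.sin ((Real.pi : ℂ) * s / 2) *
          (Complex.I * GammaC (1 - s) * Complex.sin ((Real.pi : ℂ) * (1 - s) / 2))
        = Complex.I * Complex.I * (GammaC s * GammaC (1 - s) *
          (Complex.sin ((Real.pi : ℂ) * s / 2) * Complex.cos ((Real.pi : ℂ) * s / 2))) := by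
          rw [hsin1]; ring
      _ = -1 := by rw [key, hdbl, Complex.I_mul_I]; field_simp
end

section
/- Let (b_n)_{n\ge 1} and (c_n)_{n\ge 1} be complex sequences with b_1 = c_1 = 1 which are multiplicative (b_{mn} = b_m b_n and c_{mn} = c_m c_n whenever gcd(m,n) = 1) and satisfy, for every prime p and every integer j \ge 0, the recursions b_{p^{j+1}} = b_p b_{p^j} - c_p b_{p^{j-1}} + b_{p^{j-2}} and c_{p^{j+1}} = c_p c_{p^j} - b_p c_{p^{j-1}} + c_{p^{j-2}}, where any term whose subscript has a negative exponent is interpreted as 0. Define a_{r,s} = \sum_{d | gcd(r,s)} \mu(d) c_{r/d} b_{s/d} for r, s \ge 1. Then for every prime p and all r, s \ge 1: b_p a_{r,s} = a_{r/p, s} + a_{rp, s/p} + a_{r, sp} and c_p a_{r,s} = a_{r, s/p} + a_{r/p, sp} + a_{rp, s}, where on the right-hand sides any term whose subscript r/p or s/p is not an integer is omitted. -/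
/-!
Since `b` and `c` are multiplicative, `a_{r,s}` is multiplicative in the pair `(r, s)`: it
factors over pairs `(r, s)`, `(r', s')` with `rs` coprime to `r's'`. For `r = p^α m`, `s = p^β n`
with `p ∤ mn` this gives `a_{r,s} = A(α, β) a_{m,n}`, where only `d = 1, p` survive in the
Möbius sum over `d ∣ p^{min(α,β)}`, so `A(α, β) = c_{p^α} b_{p^β} - c_{p^{α-1}} b_{p^{β-1}}`.

Indexing the prime-power values by exponents in `ℤ` and extending them by zero, the omitted terms
of the relations become the vanishing values `A(-1, ·) = A(·, -1) = 0`, and each relation is a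
polynomial identity in `A` that follows from the recursions of `b` at `β` and of `c` at `α`.
-/

open Finset ArithmeticFunction
open scoped ArithmeticFunction.Moebius

theorem Nat.Coprime.sum_divisors_mul_eq_sum_sum {M : Type*} [AddCommMonoid M] {m n : ℕ}
    (hmn : m.Coprime n) (f : ℕ → M) :
    ∑ d ∈ (m * n).divisors, f d = ∑ i ∈ m.divisors, ∑ j ∈ n.divisors, f (i * j) := by
  rw [Nat.divisors_mul, Finset.mul_def, Finset.sum_image hmn.mul_injOn_divisors,
    Finset.sum_product]

theorem Nat.gcd_mul_mul_of_coprime {r s r' s' : ℕ} (h : (r * s).Coprime (r' * s')) :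
    (r * r').gcd (s * s') = r.gcd s * r'.gcd s' := by
  rw [Nat.Coprime.gcd_mul _ h.coprime_mul_left.coprime_mul_left_right,
    Nat.Coprime.gcd_mul_right_cancel r h.coprime_mul_right_right.coprime_mul_left.symm,
    Nat.Coprime.gcd_mul_left_cancel r' h.coprime_mul_right.coprime_mul_left_right]

theorem ite_dvd_pow_mul {M : Type*} [Zero M] {p m : ℕ} (hp : 0 < p) (hm : ¬ p ∣ m)
    (f : ℕ → M) (g : ℤ → M) (hg : g (-1) = 0) (hfg : ∀ k : ℕ, f (p ^ k * m) = g k)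
    (α : ℕ) :
    (if p ∣ p ^ α * m then f (p ^ α * m / p) else 0) = g (α - 1) := by
  cases α with
  | zero => simp [hm, hg]
  | succ k =>
    rw [if_pos (dvd_mul_of_dvd_left (dvd_pow_self p k.succ_ne_zero) m), pow_succ', mul_assoc,
      Nat.mul_div_cancel_left _ hp, hfg]
    simp

variable {R : Type*} [CommRing R]

def primePowerSeq (f : ℕ → R) (p : ℕ) (k : ℤ) : R :=
  if 0 ≤ k then f (p ^ k.toNat) else 0

section primePowerSeq

variable (f g : ℕ → R) (p : ℕ)

@[simp]
theorem primePowerSeq_one : primePowerSeq f p 1 = f p := by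
  simp [primePowerSeq]

@[simp]
theorem primePowerSeq_natCast (n : ℕ) : primePowerSeq f p n = f (p ^ n) := by
  simp [primePowerSeq]

theorem primePowerSeq_of_neg {k : ℤ} (hk : k < 0) : primePowerSeq f p k = 0 :=
  if_neg (by omega)

theorem primePowerSeq_natCast_sub (j k : ℕ) :
    primePowerSeq f p (j - k) = if k ≤ j then f (p ^ (j - k)) else 0 := by
  split_ifs with h
  · rw [← Nat.cast_sub h, primePowerSeq_natCast]
  · exact primePowerSeq_of_neg f p (by omega)

theorem primePowerSeq_succ
    (h : ∀ j : ℕ, f (p ^ (j + 1)) = f p * f (p ^ j)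
      - g p * (if 1 ≤ j then f (p ^ (j - 1)) else 0) + (if 2 ≤ j then f (p ^ (j - 2)) else 0))
    (j : ℕ) :
    primePowerSeq f p (j + 1) = primePowerSeq f p 1 * primePowerSeq f p j
      - primePowerSeq g p 1 * primePowerSeq f p (j - 1) + primePowerSeq f p (j - 2) := by
  have h1 := primePowerSeq_natCast_sub f p j 1
  have h2 := primePowerSeq_natCast_sub f p j 2
  push_cast at h1 h2
  rw [h1, h2, ← Nat.cast_one, ← Nat.cast_add]
  simpa only [primePowerSeq_natCast, pow_one] using h j

end primePowerSeq

def heckeLocal (B C : ℤ → R) (x y : ℤ) : R :=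
  C x * B y - C (x - 1) * B (y - 1)

section heckeLocal

variable (B C : ℤ → R) {x y : ℤ}

theorem heckeLocal_eq_zero_of_left (hC : ∀ k < 0, C k = 0) (hx : x < 0) :
    heckeLocal B C x y = 0 := by
  simp [heckeLocal, hC x hx, hC (x - 1) (by omega)]

theorem heckeLocal_eq_zero_of_right (hB : ∀ k < 0, B k = 0) (hy : y < 0) :
    heckeLocal B C x y = 0 := by
  simp [heckeLocal, hB y hy, hB (y - 1) (by omega)]

theorem mul_heckeLocal_fst
    (hB : B (y + 1) = B 1 * B y - C 1 * B (y - 1) + B (y - 2))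
    (hC : C (x + 1) = C 1 * C x - B 1 * C (x - 1) + C (x - 2)) :
    B 1 * heckeLocal B C x y =
      heckeLocal B C (x - 1) y + heckeLocal B C (x + 1) (y - 1) + heckeLocal B C x (y + 1) := by
  simp only [heckeLocal, add_sub_cancel_right, sub_sub, show (1 : ℤ) + 1 = 2 by norm_num]
  linear_combination -C x * hB - B (y - 1) * hC

theorem mul_heckeLocal_snd
    (hB : B (y + 1) = B 1 * B y - C 1 * B (y - 1) + B (y - 2))
    (hC : C (x + 1) = C 1 * C x - B 1 * C (x - 1) + C (x - 2)) :
    C 1 * heckeLocal B C x y =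
      heckeLocal B C x (y - 1) + heckeLocal B C (x - 1) (y + 1) + heckeLocal B C (x + 1) y := by
  simp only [heckeLocal, add_sub_cancel_right, sub_sub, show (1 : ℤ) + 1 = 2 by norm_num]
  linear_combination -C (x - 1) * hB - B y * hC

end heckeLocal

def gl3Coeff (b c : ℕ → R) (r s : ℕ) : R :=
  ∑ d ∈ (r.gcd s).divisors, (μ d : R) * c (r / d) * b (s / d)

theorem gl3Coeff_mul_of_coprime {b c : ℕ → R}
    (hb : ∀ m n, m.Coprime n → b (m * n) = b m * b n)
    (hc : ∀ m n, m.Coprime n → c (m * n) = c m * c n)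
    {r s r' s' : ℕ} (h : (r * s).Coprime (r' * s')) :
    gl3Coeff b c (r * r') (s * s') = gl3Coeff b c r s * gl3Coeff b c r' s' := by
  have hg : (r.gcd s).Coprime (r'.gcd s') :=
    (h.coprime_dvd_left ((Nat.gcd_dvd_left r s).trans (dvd_mul_right r s))).coprime_dvd_right
      ((Nat.gcd_dvd_left r' s').trans (dvd_mul_right r' s'))
  rw [gl3Coeff, Nat.gcd_mul_mul_of_coprime h, hg.sum_divisors_mul_eq_sum_sum, gl3Coeff,
    gl3Coeff, Finset.sum_mul_sum]
  refine Finset.sum_congr rfl fun i hi => Finset.sum_congr rfl fun j hj => ?_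
  have hi' := Nat.dvd_of_mem_divisors hi
  have hj' := Nat.dvd_of_mem_divisors hj
  have hir : i ∣ r := hi'.trans (Nat.gcd_dvd_left r s)
  have his : i ∣ s := hi'.trans (Nat.gcd_dvd_right r s)
  have hjr : j ∣ r' := hj'.trans (Nat.gcd_dvd_left r' s')
  have hjs : j ∣ s' := hj'.trans (Nat.gcd_dvd_right r' s')
  have hrr : (r / i).Coprime (r' / j) :=
    (h.coprime_mul_right.coprime_mul_right_right.coprime_div_left hir).coprime_div_right hjr
  have hss : (s / i).Coprime (s' / j) :=
    (h.coprime_mul_left.coprime_mul_left_right.coprime_div_left his).coprime_div_right hjs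
  rw [isMultiplicative_moebius.map_mul_of_coprime ((hg.coprime_dvd_left hi').coprime_dvd_right hj'),
    ← Nat.div_mul_div_comm hir hjr, ← Nat.div_mul_div_comm his hjs, hc _ _ hrr, hb _ _ hss]
  push_cast
  ring

theorem gl3Coeff_prime_pow (b c : ℕ → R) {p : ℕ} (hp : p.Prime) (α β : ℕ) :
    gl3Coeff b c (p ^ α) (p ^ β) = heckeLocal (primePowerSeq b p) (primePowerSeq c p) α β := by
  have hgcd : (p ^ α).gcd (p ^ β) = p ^ min α β := by
    rcases le_total α β with h | h
    · rw [min_eq_left h, Nat.gcd_eq_left (Nat.pow_dvd_pow p h)]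
    · rw [min_eq_right h, Nat.gcd_eq_right (Nat.pow_dvd_pow p h)]
  rw [gl3Coeff, hgcd, Nat.sum_divisors_prime_pow hp, heckeLocal]
  cases h : min α β with
  | zero =>
    obtain h' | h' : (α : ℤ) - 1 < 0 ∨ (β : ℤ) - 1 < 0 := by omega
    all_goals simp [primePowerSeq_of_neg _ _ h']
  | succ k =>
    rw [sum_range_succ', sum_range_succ', sum_eq_zero]
    · rw [show (α : ℤ) - 1 = (α - 1 : ℕ) by omega,
        show (β : ℤ) - 1 = (β - 1 : ℕ) by omega]
      have hα : p ^ α / p = p ^ (α - 1) := by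
        simpa using Nat.pow_div (by omega : 1 ≤ α) hp.pos
      have hβ : p ^ β / p = p ^ (β - 1) := by
        simpa using Nat.pow_div (by omega : 1 ≤ β) hp.pos
      simp [moebius_apply_prime hp, hα, hβ]
      ring
    · intro i _
      rw [moebius_apply_prime_pow hp (by omega), if_neg (by omega)]
      simp

theorem hecke_four_term_relations_general
    (b c : ℕ → ℂ)
    (hbmul : ∀ m n : ℕ, Nat.Coprime m n → b (m * n) = b m * b n)
    (hcmul : ∀ m n : ℕ, Nat.Coprime m n → c (m * n) = c m * c n)
    (hbrec : ∀ p : ℕ, p.Prime → ∀ j : ℕ,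
      b (p ^ (j + 1)) = b p * b (p ^ j) - c p * (if 1 ≤ j then b (p ^ (j - 1)) else 0)
        + (if 2 ≤ j then b (p ^ (j - 2)) else 0))
    (hcrec : ∀ p : ℕ, p.Prime → ∀ j : ℕ,
      c (p ^ (j + 1)) = c p * c (p ^ j) - b p * (if 1 ≤ j then c (p ^ (j - 1)) else 0)
        + (if 2 ≤ j then c (p ^ (j - 2)) else 0))
    (a : ℕ → ℕ → ℂ)
    (ha : ∀ r s : ℕ, a r s = ∑ d ∈ (Nat.gcd r s).divisors,
      ((ArithmeticFunction.moebius d : ℤ) : ℂ) * c (r / d) * b (s / d)) :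
    ∀ p : ℕ, p.Prime → ∀ r s : ℕ, 1 ≤ r → 1 ≤ s →
      (b p * a r s =
        (if p ∣ r then a (r / p) s else 0) + (if p ∣ s then a (r * p) (s / p) else 0)
          + a r (s * p)) ∧
      (c p * a r s =
        (if p ∣ s then a r (s / p) else 0) + (if p ∣ r then a (r / p) (s * p) else 0)
          + a (r * p) s) := by
  intro p hp r s hr hs
  obtain rfl : a = gl3Coeff b c := funext fun r => funext fun s => ha r s
  obtain ⟨α, m, hm, rfl⟩ : ∃ α m, ¬ p ∣ m ∧ p ^ α * m = r :=
    ⟨_, _, Nat.not_dvd_ordCompl hp (by omega), Nat.ordProj_mul_ordCompl_eq_self r p⟩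
  obtain ⟨β, n, hn, rfl⟩ : ∃ β n, ¬ p ∣ n ∧ p ^ β * n = s :=
    ⟨_, _, Nat.not_dvd_ordCompl hp (by omega), Nat.ordProj_mul_ordCompl_eq_self s p⟩
  set B := primePowerSeq b p
  set C := primePowerSeq c p
  set S := gl3Coeff b c m n
  have factor (x y : ℕ) : gl3Coeff b c (p ^ x * m) (p ^ y * n) = heckeLocal B C x y * S := by
    have hcop : (p ^ x * p ^ y).Coprime (m * n) := by
      rw [← pow_add]
      exact .pow_left _ (.mul_right (hp.coprime_iff_not_dvd.2 hm) (hp.coprime_iff_not_dvd.2 hn))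
    rw [gl3Coeff_mul_of_coprime hbmul hcmul hcop, gl3Coeff_prime_pow b c hp]
  have zero_left (y : ℤ) : heckeLocal B C (-1) y * S = 0 := by
    rw [heckeLocal_eq_zero_of_left B C (fun k => primePowerSeq_of_neg c p) (by norm_num), zero_mul]
  have zero_right (x : ℤ) : heckeLocal B C x (-1) * S = 0 := by
    rw [heckeLocal_eq_zero_of_right B C (fun k => primePowerSeq_of_neg b p) (by norm_num),
      zero_mul]
  rw [show p ^ α * m * p = p ^ (α + 1) * m by ring, show p ^ β * n * p = p ^ (β + 1) * n by ring,
    ite_dvd_pow_mul hp.pos hm (gl3Coeff b c · _) (heckeLocal B C · β * S) (zero_left _) (factor · β),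
    ite_dvd_pow_mul hp.pos hn (gl3Coeff b c _) (heckeLocal B C (α + 1 : ℕ) · * S) (zero_right _)
      (factor _),
    ite_dvd_pow_mul hp.pos hn (gl3Coeff b c _) (heckeLocal B C α · * S) (zero_right _) (factor α),
    ite_dvd_pow_mul hp.pos hm (gl3Coeff b c · _) (heckeLocal B C · (β + 1 : ℕ) * S) (zero_left _)
      (factor · _),
    factor, factor, factor, ← primePowerSeq_one b p, ← primePowerSeq_one c p]
  push_cast
  have hB := primePowerSeq_succ b c p (hbrec p hp) β
  have hC := primePowerSeq_succ c b p (hcrec p hp) α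
  exact ⟨by linear_combination S * mul_heckeLocal_fst B C hB hC,
    by linear_combination S * mul_heckeLocal_snd B C hB hC⟩

theorem hecke_four_term_relations
    (b c : ℕ → ℂ) (hb1 : b 1 = 1) (hc1 : c 1 = 1)
    (hbmul : ∀ m n : ℕ, Nat.Coprime m n → b (m * n) = b m * b n)
    (hcmul : ∀ m n : ℕ, Nat.Coprime m n → c (m * n) = c m * c n)
    (hbrec : ∀ p : ℕ, p.Prime → ∀ j : ℕ,
      b (p ^ (j + 1)) = b p * b (p ^ j) - c p * (if 1 ≤ j then b (p ^ (j - 1)) else 0)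
        + (if 2 ≤ j then b (p ^ (j - 2)) else 0))
    (hcrec : ∀ p : ℕ, p.Prime → ∀ j : ℕ,
      c (p ^ (j + 1)) = c p * c (p ^ j) - b p * (if 1 ≤ j then c (p ^ (j - 1)) else 0)
        + (if 2 ≤ j then c (p ^ (j - 2)) else 0))
    (a : ℕ → ℕ → ℂ)
    (ha : ∀ r s : ℕ, a r s = ∑ d ∈ (Nat.gcd r s).divisors,
      ((ArithmeticFunction.moebius d : ℤ) : ℂ) * c (r / d) * b (s / d)) :
    ∀ p : ℕ, p.Prime → ∀ r s : ℕ, 1 ≤ r → 1 ≤ s →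
      (b p * a r s =
        (if p ∣ r then a (r / p) s else 0) + (if p ∣ s then a (r * p) (s / p) else 0)
          + a r (s * p)) ∧
      (c p * a r s =
        (if p ∣ s then a r (s / p) else 0) + (if p ∣ r then a (r / p) (s * p) else 0)
          + a (r * p) s) :=
  hecke_four_term_relations_general b c hbmul hcmul hbrec hcrec a ha
end

section
/- Let q \ge 1. For each divisor r of q define the linear map m_{r,q} from functions Z/rZ \to C to functions Z/qZ \to C by (m_{r,q} b)(k) = b(kr/q) if (q/r) divides the integer k representing the residue class (this condition and the value being independent of the representative), and (m_{r,q} b)(k) = 0 otherwise. Then the space V_q = { a : Z/qZ \to C : a(\ell) = 0 for every unit \ell of Z/qZ } is the internal direct sum, over the divisors r of q with 1 \le r < q, of the subspaces m_{r,q}(U_r), where U_r = { b : Z/rZ \to C : b(\ell) = 0 whenever \ell is not a unit of Z/rZ }; that is, every a \in V_q can be written uniquely as a = \sum_{r | q, 1 \le r < q} m_{r,q} b_r with b_r \in U_r. -/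
/-- The map `m_{r,q}` sending a function on `ℤ/rℤ` to the function on `ℤ/qℤ` supported
on multiples of `q/r`, with `(m_{r,q} b)(k) = b(kr/q)` when `(q/r) ∣ k` and `0` otherwise. -/
noncomputable def mMap (r q : ℕ) (b : ZMod r → ℂ) (k : ZMod q) : ℂ :=
  if (q / r) ∣ k.val then b (((k.val * r / q : ℕ) : ZMod r)) else 0

private lemma div_aux (v q g : ℕ) (hq : 0 < q) (hgq : g ∣ q) (hg : 0 < g) :
    v * (q / g) / q = v / g := by
  obtain ⟨s, rfl⟩ := hgq
  have hs : 0 < s := by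
    rcases Nat.eq_zero_or_pos s with h | h
    · subst h; simp at hq
    · exact h
  rw [Nat.mul_div_cancel_left s hg]
  exact Nat.mul_div_mul_right v g hs

private lemma gcd_mul_aux (l r c : ℕ) (hcop : Nat.Coprime l r) :
    Nat.gcd (l * c) (r * c) = c := by
  rw [Nat.gcd_mul_right, hcop, one_mul]

lemma mMap_ne {q r : ℕ} (hq : 0 < q) (hrq : r ∣ q) (hrpos : 0 < r)
    (b : ZMod r → ℂ) (hb : ∀ ℓ : ZMod r, ¬ IsUnit ℓ → b ℓ = 0) (k : ZMod q)
    (hne : r ≠ q / Nat.gcd k.val q) : mMap r q b k = 0 := by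
  obtain ⟨c, rfl⟩ := hrq
  have hcpos : 0 < c := by
    rcases Nat.eq_zero_or_pos c with h | h
    · subst h; simp at hq
    · exact h
  have hqr : r * c / r = c := Nat.mul_div_cancel_left c hrpos
  unfold mMap
  rw [hqr]
  split_ifs with h
  · apply hb
    rw [ZMod.isUnit_iff_coprime]
    intro hcop
    obtain ⟨t, ht⟩ := h
    have hm : k.val * r / (r * c) = t := by
      rw [ht, show c * t * r = (r * c) * t by ring]
      exact Nat.mul_div_cancel_left t hq
    rw [hm] at hcop
    apply hne
    have hg : Nat.gcd k.val (r * c) = c := by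
      rw [ht, mul_comm c t]
      exact gcd_mul_aux t r c hcop
    rw [hg, mul_comm r c, Nat.mul_div_cancel_left r hcpos]
  · rfl

lemma mMap_self {q : ℕ} (hq : 0 < q) (k : ZMod q)
    (b : ZMod (q / Nat.gcd k.val q) → ℂ) :
    mMap (q / Nat.gcd k.val q) q b k = b ((k.val / Nat.gcd k.val q : ℕ)) := by
  have hgq : Nat.gcd k.val q ∣ q := Nat.gcd_dvd_right _ _
  have hgv : Nat.gcd k.val q ∣ k.val := Nat.gcd_dvd_left _ _
  have hgpos : 0 < Nat.gcd k.val q := Nat.gcd_pos_of_pos_right _ hq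
  unfold mMap
  rw [Nat.div_div_self hgq hq.ne', if_pos hgv,
    div_aux k.val q (Nat.gcd k.val q) hq hgq hgpos]

lemma sum_mMap {q : ℕ} (hq : 0 < q) (B' : (r : ℕ) → ZMod r → ℂ)
    (hB' : ∀ r ∈ q.properDivisors, ∀ ℓ : ZMod r, ¬ IsUnit ℓ → B' r ℓ = 0)
    (k : ZMod q) :
    ∑ r ∈ q.properDivisors, mMap r q (B' r) k =
      if Nat.gcd k.val q = 1 then 0
      else B' (q / Nat.gcd k.val q) ((k.val / Nat.gcd k.val q : ℕ)) := by
  have hgq : Nat.gcd k.val q ∣ q := Nat.gcd_dvd_right _ _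
  have hgpos : 0 < Nat.gcd k.val q := Nat.gcd_pos_of_pos_right _ hq
  have key : ∀ r ∈ q.properDivisors, r ≠ q / Nat.gcd k.val q → mMap r q (B' r) k = 0 := by
    intro r hr hne
    obtain ⟨hrq, hrlt⟩ := Nat.mem_properDivisors.mp hr
    exact mMap_ne hq hrq (Nat.pos_of_dvd_of_pos hrq hq) (B' r) (hB' r hr) k hne
  split_ifs with h1
  · apply Finset.sum_eq_zero
    intro r hr
    apply key r hr
    rw [h1, Nat.div_one]
    exact (Nat.mem_properDivisors.mp hr).2.ne
  · have hmem : q / Nat.gcd k.val q ∈ q.properDivisors := by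
      rw [Nat.mem_properDivisors]
      exact ⟨Nat.div_dvd_of_dvd hgq, Nat.div_lt_self hq (by omega)⟩
    rw [Finset.sum_eq_single_of_mem _ hmem (fun r hr hne => key r hr hne)]
    exact mMap_self hq k _

theorem nonunit_function_decomposition (q : ℕ) (hq : 1 ≤ q)
    (a : ZMod q → ℂ) (ha : ∀ ℓ : ZMod q, IsUnit ℓ → a ℓ = 0) :
    ∃ B : (r : ℕ) → ZMod r → ℂ,
      ((∀ r ∈ q.properDivisors, ∀ ℓ : ZMod r, ¬ IsUnit ℓ → B r ℓ = 0) ∧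
        (∀ k : ZMod q, a k = ∑ r ∈ q.properDivisors, mMap r q (B r) k)) ∧
      (∀ B' : (r : ℕ) → ZMod r → ℂ,
        (∀ r ∈ q.properDivisors, ∀ ℓ : ZMod r, ¬ IsUnit ℓ → B' r ℓ = 0) →
        (∀ k : ZMod q, a k = ∑ r ∈ q.properDivisors, mMap r q (B' r) k) →
        ∀ r ∈ q.properDivisors, B' r = B r) := by
  classical
  have hq0 : 0 < q := hq
  haveI : NeZero q := ⟨hq0.ne'⟩
  refine ⟨fun r ℓ => if IsUnit ℓ then a ((ℓ.val * (q / r) : ℕ) : ZMod q) else 0, ⟨?_, ?_⟩, ?_⟩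
  · intro r hr ℓ hℓ
    simp [hℓ]
  · intro k
    rw [sum_mMap hq0 _ (by intro r hr ℓ hℓ; simp [hℓ]) k]
    have hgq : Nat.gcd k.val q ∣ q := Nat.gcd_dvd_right _ _
    have hgv : Nat.gcd k.val q ∣ k.val := Nat.gcd_dvd_left _ _
    have hgpos : 0 < Nat.gcd k.val q := Nat.gcd_pos_of_pos_right _ hq0
    by_cases h1 : Nat.gcd k.val q = 1
    · rw [if_pos h1]
      apply ha
      rw [← ZMod.natCast_zmod_val k, ZMod.isUnit_iff_coprime]
      exact h1
    · rw [if_neg h1]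
      have hrpos : 0 < q / Nat.gcd k.val q :=
        Nat.div_pos (Nat.le_of_dvd hq0 hgq) hgpos
      haveI : NeZero (q / Nat.gcd k.val q) := ⟨hrpos.ne'⟩
      have hval : ((k.val / Nat.gcd k.val q : ℕ) :
          ZMod (q / Nat.gcd k.val q)).val = k.val / Nat.gcd k.val q :=
        ZMod.val_cast_of_lt (Nat.div_lt_div_of_lt_of_dvd hgq (ZMod.val_lt k))
      have hunit : IsUnit ((k.val / Nat.gcd k.val q : ℕ) : ZMod (q / Nat.gcd k.val q)) := by
        rw [ZMod.isUnit_iff_coprime]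
        exact Nat.coprime_div_gcd_div_gcd hgpos
      rw [if_pos hunit, hval]
      have : k.val / Nat.gcd k.val q * (q / (q / Nat.gcd k.val q)) = k.val := by
        rw [Nat.div_div_self hgq hq0.ne', Nat.div_mul_cancel hgv]
      rw [this, ZMod.natCast_zmod_val]
  · intro B' hB'0 hB'sum r hr
    obtain ⟨hrq, hrlt⟩ := Nat.mem_properDivisors.mp hr
    have hrpos : 0 < r := Nat.pos_of_dvd_of_pos hrq hq0
    haveI : NeZero r := ⟨hrpos.ne'⟩
    funext ℓ
    by_cases hu : IsUnit ℓ
    swap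
    · rw [hB'0 r hr ℓ hu]
      simp [hu]
    · have hcpos : 0 < q / r := Nat.div_pos (Nat.le_of_dvd hq0 hrq) hrpos
      set k : ZMod q := ((ℓ.val * (q / r) : ℕ) : ZMod q) with hk
      have hkval : k.val = ℓ.val * (q / r) := by
        apply ZMod.val_cast_of_lt
        calc ℓ.val * (q / r) < r * (q / r) :=
              (Nat.mul_lt_mul_right hcpos).mpr (ZMod.val_lt ℓ)
          _ = q := Nat.mul_div_cancel' hrq
      have hcop : Nat.Coprime ℓ.val r := by
        rw [← ZMod.isUnit_iff_coprime, ZMod.natCast_zmod_val]; exact hu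
      have h2 : Nat.gcd (ℓ.val * (q / r)) (r * (q / r)) = q / r :=
        gcd_mul_aux ℓ.val r (q / r) hcop
      rw [Nat.mul_div_cancel' hrq] at h2
      have hgcd : Nat.gcd k.val q = q / r := by rw [hkval]; exact h2
      have hqdiv : q / Nat.gcd k.val q = r := by
        rw [hgcd, Nat.div_div_self hrq hq0.ne']
      have hvaldiv : k.val / Nat.gcd k.val q = ℓ.val := by
        rw [hgcd, hkval, Nat.mul_div_cancel _ hcpos]
      have hne1 : Nat.gcd k.val q ≠ 1 := by
        intro hone
        rw [hone, Nat.div_one] at hqdiv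
        omega
      have e1' : a k = B' (q / Nat.gcd k.val q) ((k.val / Nat.gcd k.val q : ℕ)) := by
        rw [hB'sum k, sum_mMap hq0 B' hB'0 k, if_neg hne1]
      rw [hvaldiv, hqdiv, ZMod.natCast_zmod_val] at e1'
      rw [← e1']
      simp [hu, ← hk]
end
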